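/- arXiv:2208.04169 — 4 statements merged into one kernel-verified Lean document; each statement's English description precedes it below -/
import Mathlib

section
/- Let φ, u : EuclideanSpace ℝ (Fin 3) → ℝ be twice continuously differentiable (ContDiff ℝ 2). Define the vector field v : EuclideanSpace ℝ (Fin 3) → EuclideanSpace ℝ (Fin 3) by v y = grad u y + u y • grad φ y (i.e., v = J⁰u). Then for every x, curl v x + (grad φ x) × (v x) = 0; that is, the composition of the shifted flux operators satisfies J¹ ∘ J⁰ = 0 and the shifted operators preserve the de Rham complex property curl ∘ grad = 0. -/
/-! Symmetry of second derivatives gives `curl ∘ grad = 0`, and the product rule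
`curl (f • G) = f • curl G + grad f × G` then turns `curl (grad u + u • grad φ)` into
`grad u × grad φ`. This cancels against
`grad φ × (grad u + u • grad φ) = grad φ × grad u`. -/

/-- Fréchet directional derivative of a scalar function along the `i`-th
standard basis vector of `EuclideanSpace ℝ (Fin 3)`. -/
noncomputable def pd (i : Fin 3) (f : EuclideanSpace ℝ (Fin 3) → ℝ)
    (x : EuclideanSpace ℝ (Fin 3)) : ℝ :=
  fderiv ℝ f x (EuclideanSpace.single i 1)

/-- Componentwise curl of a vector field on `EuclideanSpace ℝ (Fin 3)`. -/
noncomputable def curl3 (F : EuclideanSpace ℝ (Fin 3) → EuclideanSpace ℝ (Fin 3))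
    (x : EuclideanSpace ℝ (Fin 3)) : EuclideanSpace ℝ (Fin 3) :=
  WithLp.toLp 2 ![pd 1 (fun y => F y 2) x - pd 2 (fun y => F y 1) x,
    pd 2 (fun y => F y 0) x - pd 0 (fun y => F y 2) x,
    pd 0 (fun y => F y 1) x - pd 1 (fun y => F y 0) x]

/-- Three-dimensional cross product on `EuclideanSpace ℝ (Fin 3)`. -/
noncomputable def cross3 (a b : EuclideanSpace ℝ (Fin 3)) : EuclideanSpace ℝ (Fin 3) :=
  WithLp.toLp 2 (crossProduct a b)

theorem ContDiff.differentiable_gradient {F : Type*} [NormedAddCommGroup F]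
    [InnerProductSpace ℝ F] [CompleteSpace F] {f : F → ℝ} (hf : ContDiff ℝ 2 f) :
    Differentiable ℝ (gradient f) :=
  (InnerProductSpace.toDual ℝ F).symm.differentiable.comp
    ((hf.fderiv_right (m := 1) (by norm_num)).differentiable one_ne_zero)

theorem gradient_apply_eq_pd (f : EuclideanSpace ℝ (Fin 3) → ℝ)
    (y : EuclideanSpace ℝ (Fin 3)) (i : Fin 3) : gradient f y i = pd i f y := by
  rw [pd, ← inner_gradient_left, EuclideanSpace.inner_single_right]; simp

section PartialDerivatives

variable {f g : EuclideanSpace ℝ (Fin 3) → ℝ} {x : EuclideanSpace ℝ (Fin 3)}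

theorem pd_add (hf : DifferentiableAt ℝ f x) (hg : DifferentiableAt ℝ g x) (i : Fin 3) :
    pd i (fun y => f y + g y) x = pd i f x + pd i g x := by
  simp [pd, fderiv_fun_add hf hg]

theorem pd_mul (hf : DifferentiableAt ℝ f x) (hg : DifferentiableAt ℝ g x) (i : Fin 3) :
    pd i (fun y => f y * g y) x = f x * pd i g x + g x * pd i f x := by
  simp [pd, fderiv_fun_mul hf hg]

theorem pd_pd_comm (hf : ContDiff ℝ 2 f) (i j : Fin 3) : pd i (pd j f) x = pd j (pd i f) x := by
  have hdf : Differentiable ℝ (fderiv ℝ f) :=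
    (hf.fderiv_right (m := 1) (by norm_num)).differentiable one_ne_zero
  have hpd (k l : Fin 3) : pd k (pd l f) x =
      fderiv ℝ (fderiv ℝ f) x (EuclideanSpace.single k 1) (EuclideanSpace.single l 1) := by
    change fderiv ℝ (fun y => fderiv ℝ f y (EuclideanSpace.single l 1)) x _ = _
    rw [fderiv_clm_apply (hdf x) (differentiableAt_const _)]
    simp
  rw [hpd, hpd]
  exact hf.contDiffAt.isSymmSndFDerivAt (by norm_num) _ _

end PartialDerivatives

section CrossProduct

variable (a b c : EuclideanSpace ℝ (Fin 3))

theorem cross3_self : cross3 a a = 0 := by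
  simp [cross3, cross_self]

theorem cross3_add_cross3_swap : cross3 a b + cross3 b a = 0 := by
  simp [cross3, ← WithLp.toLp_add, cross_anticomm']

theorem cross3_add_right : cross3 a (b + c) = cross3 a b + cross3 a c := by
  simp [cross3]

theorem cross3_smul_right (r : ℝ) : cross3 a (r • b) = r • cross3 a b := by
  simp [cross3]

end CrossProduct

section Curl

variable {F G : EuclideanSpace ℝ (Fin 3) → EuclideanSpace ℝ (Fin 3)}
  {f : EuclideanSpace ℝ (Fin 3) → ℝ} {x : EuclideanSpace ℝ (Fin 3)}

theorem curl3_gradient (hf : ContDiff ℝ 2 f) : curl3 (gradient f) x = 0 := by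
  simp only [curl3, gradient_apply_eq_pd]
  rw [pd_pd_comm hf 1 2, pd_pd_comm hf 2 0, pd_pd_comm hf 0 1]
  ext i; fin_cases i <;> simp

theorem curl3_add (hF : DifferentiableAt ℝ F x) (hG : DifferentiableAt ℝ G x) :
    curl3 (fun y => F y + G y) x = curl3 F x + curl3 G x := by
  have hpd (i j : Fin 3) :
      pd i (fun y => F y j + G y j) x = pd i (fun y => F y j) x + pd i (fun y => G y j) x :=
    pd_add (differentiableAt_euclidean.1 hF j) (differentiableAt_euclidean.1 hG j) i
  ext i; fin_cases i <;> simp [curl3, hpd] <;> ring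

theorem curl3_smul (hf : DifferentiableAt ℝ f x) (hG : DifferentiableAt ℝ G x) :
    curl3 (fun y => f y • G y) x = f x • curl3 G x + cross3 (gradient f x) (G x) := by
  have hpd (i j : Fin 3) :
      pd i (fun y => f y * G y j) x = f x * pd i (fun y => G y j) x + G x j * pd i f x :=
    pd_mul hf (differentiableAt_euclidean.1 hG j) i
  ext i; fin_cases i <;> simp [curl3, cross3, cross_apply, hpd, gradient_apply_eq_pd] <;> ring

end Curl

/-- The composition of the shifted flux operators `J¹ ∘ J⁰` vanishes:
the shifted operators preserve the de Rham complex property `curl ∘ grad = 0`. -/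
theorem shifted_flux_curl_grad_eq_zero
    (φ u : EuclideanSpace ℝ (Fin 3) → ℝ)
    (hφ : ContDiff ℝ 2 φ) (hu : ContDiff ℝ 2 u)
    (v : EuclideanSpace ℝ (Fin 3) → EuclideanSpace ℝ (Fin 3))
    (hv : ∀ y, v y = gradient u y + u y • gradient φ y)
    (x : EuclideanSpace ℝ (Fin 3)) :
    curl3 v x + cross3 (gradient φ x) (v x) = 0 := by
  have hdu : DifferentiableAt ℝ u x := hu.differentiable (by norm_num) x
  have hdgu := hu.differentiable_gradient x
  have hdgφ := hφ.differentiable_gradient x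
  have hcurl : curl3 (fun y => gradient u y + u y • gradient φ y) x =
      cross3 (gradient u x) (gradient φ x) := by
    rw [curl3_add hdgu (hdu.fun_smul hdgφ), curl3_smul hdu hdgφ, curl3_gradient hu,
      curl3_gradient hφ, smul_zero, zero_add, zero_add]
  rw [funext hv, hcurl, cross3_add_right, cross3_smul_right, cross3_self, smul_zero, add_zero,
    cross3_add_cross3_swap]
end

section
/- (Exactness of the face quadrature rule for affine exponents.) For all pairwise distinct real numbers a, b, c, ∫ s in (0:ℝ)..1, ∫ t in (0:ℝ)..(1 − s), Real.exp ((1 − s − t) * a + s * b + t * c) = Real.exp a / ((a − b) * (a − c)) + Real.exp b / ((b − a) * (b − c)) + Real.exp c / ((c − a) * (c − b)). Consequently, the face quadrature rule (3.18) for the average ⨍ e^{φ} dA over a triangle (which equals 2 times this iterated integral) is exact whenever θ = grad φ is constant on the face, i.e., φ is affine on the triangle with vertex values a, b, c. -/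
/-! Integrating first in `t` and then in `s`, each step integrates the exponential of an affine
function, i.e. takes a divided difference of `exp`; the iterated integral is therefore the
second divided difference of `exp` at `a`, `b`, `c`, which is the right-hand side. -/

open Real

lemma integral_exp_add_mul (k m u v : ℝ) (hm : m ≠ 0) :
    ∫ t in u..v, exp (k + t * m) = (exp (k + v * m) - exp (k + u * m)) / m := by
  have hcomm : ∀ t, k + t * m = m * t + k := fun t => by ring
  simp only [hcomm, intervalIntegral.integral_comp_mul_add exp hm k, integral_exp, smul_eq_mul]
  field_simp

lemma integral_exp_affine_triangle_slice (a b c s : ℝ) (hac : a ≠ c) :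
    ∫ t in (0:ℝ)..(1 - s), exp ((1 - s - t) * a + s * b + t * c)
      = (exp (c + s * (b - c)) - exp (a + s * (b - a))) / (c - a) := by
  have hsplit : ∀ t, (1 - s - t) * a + s * b + t * c = ((1 - s) * a + s * b) + t * (c - a) :=
    fun t => by ring
  simp only [hsplit, integral_exp_add_mul _ _ _ _ (sub_ne_zero.mpr hac.symm)]
  ring_nf

/-- Exactness of the face quadrature rule for affine exponents: the integral of
`e^{φ}` over the reference triangle, with `φ` affine taking values `a`, `b`, `c`
at the vertices, equals the three-point exponential formula. -/
theorem face_quadrature_exact (a b c : ℝ)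
    (hab : a ≠ b) (hac : a ≠ c) (hbc : b ≠ c) :
    (∫ s in (0:ℝ)..1, ∫ t in (0:ℝ)..(1 - s),
        Real.exp ((1 - s - t) * a + s * b + t * c))
      = Real.exp a / ((a - b) * (a - c)) + Real.exp b / ((b - a) * (b - c))
        + Real.exp c / ((c - a) * (c - b)) := by
  have hint : ∀ k m : ℝ, IntervalIntegrable (fun s => exp (k + s * m)) MeasureTheory.volume 0 1 :=
    fun k m => (continuous_exp.comp (by fun_prop)).intervalIntegrable _ _
  simp only [integral_exp_affine_triangle_slice a b c _ hac]
  rw [intervalIntegral.integral_div, intervalIntegral.integral_sub (hint _ _) (hint _ _),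
    integral_exp_add_mul _ _ _ _ (sub_ne_zero.mpr hbc),
    integral_exp_add_mul _ _ _ _ (sub_ne_zero.mpr hab.symm)]
  have hab' : a - b ≠ 0 := sub_ne_zero.mpr hab
  have hac' : a - c ≠ 0 := sub_ne_zero.mpr hac
  have hbc' : b - c ≠ 0 := sub_ne_zero.mpr hbc
  field_simp
  ring_nf
end

section
/- (Exactness of the element quadrature rule for affine exponents.) For all pairwise distinct real numbers a, b, c, d, ∫ s in (0:ℝ)..1, ∫ t in (0:ℝ)..(1 − s), ∫ r in (0:ℝ)..(1 − s − t), Real.exp ((1 − s − t − r) * a + s * b + t * c + r * d) = Real.exp a / ((a − b) * (a − c) * (a − d)) + Real.exp b / ((b − a) * (b − c) * (b − d)) + Real.exp c / ((c − a) * (c − b) * (c − d)) + Real.exp d / ((d − a) * (d − b) * (d − c)). Consequently, the element quadrature rule (3.19) for the average ⨍ e^{φ} dV over a tetrahedron (which equals 6 times this iterated integral) is exact whenever θ = grad φ is constant on the element, i.e., φ is affine with vertex values a, b, c, d. -/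
open intervalIntegral Real

lemma exp_aff (p q u : ℝ) (hq : q ≠ 0) :
    ∫ x in (0:ℝ)..u, Real.exp (p + q * x)
      = (Real.exp (p + q * u) - Real.exp p) / q := by
  have h : ∀ x ∈ Set.uIcc (0:ℝ) u,
      HasDerivAt (fun x => Real.exp (p + q * x) / q) (Real.exp (p + q * x)) x := by
    intro x _
    have h1 : HasDerivAt (fun x : ℝ => p + q * x) q x := by
      simpa using ((hasDerivAt_id x).const_mul q).const_add p
    have h2 := h1.exp.div_const q
    simpa [mul_div_assoc, mul_div_cancel_right₀, hq] using h2
  rw [intervalIntegral.integral_eq_sub_of_hasDerivAt h ((by fun_prop : Continuous fun x : ℝ => Real.exp (p + q * x)).intervalIntegrable _ _)]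
  simp [sub_div]

lemma exp_aff' (k p q u : ℝ) (hq : q ≠ 0) :
    ∫ x in (0:ℝ)..u, k * Real.exp (p + q * x)
      = k * ((Real.exp (p + q * u) - Real.exp p) / q) := by
  rw [intervalIntegral.integral_const_mul, exp_aff _ _ _ hq]

set_option maxHeartbeats 2000000 in
/-- Exactness of the element quadrature rule for affine exponents: the integral
of `e^{φ}` over the reference tetrahedron, with `φ` affine taking values
`a`, `b`, `c`, `d` at the vertices, equals the four-point exponential formula. -/
theorem element_quadrature_exact (a b c d : ℝ)
    (hab : a ≠ b) (hac : a ≠ c) (had : a ≠ d)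
    (hbc : b ≠ c) (hbd : b ≠ d) (hcd : c ≠ d) :
    (∫ s in (0:ℝ)..1, ∫ t in (0:ℝ)..(1 - s), ∫ r in (0:ℝ)..(1 - s - t),
        Real.exp ((1 - s - t - r) * a + s * b + t * c + r * d))
      = Real.exp a / ((a - b) * (a - c) * (a - d))
        + Real.exp b / ((b - a) * (b - c) * (b - d))
        + Real.exp c / ((c - a) * (c - b) * (c - d))
        + Real.exp d / ((d - a) * (d - b) * (d - c)) := by
  have hda : d - a ≠ 0 := sub_ne_zero.mpr had.symm
  have hcd' : c - d ≠ 0 := sub_ne_zero.mpr hcd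
  have hca : c - a ≠ 0 := sub_ne_zero.mpr hac.symm
  have hbc' : b - c ≠ 0 := sub_ne_zero.mpr hbc
  have hbd' : b - d ≠ 0 := sub_ne_zero.mpr hbd
  have hba : b - a ≠ 0 := sub_ne_zero.mpr hab.symm
  have g1 : a - b ≠ 0 := sub_ne_zero.mpr hab
  have g2 : a - c ≠ 0 := sub_ne_zero.mpr hac
  have g3 : a - d ≠ 0 := sub_ne_zero.mpr had
  have g4 : b - c ≠ 0 := sub_ne_zero.mpr hbc
  have g5 : b - d ≠ 0 := sub_ne_zero.mpr hbd
  have g6 : c - d ≠ 0 := sub_ne_zero.mpr hcd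
  have g7 : d - c ≠ 0 := sub_ne_zero.mpr hcd.symm
  have g8 : c - b ≠ 0 := sub_ne_zero.mpr hbc.symm
  have g9 : d - b ≠ 0 := sub_ne_zero.mpr hbd.symm
  have h1 : ∀ s t : ℝ,
      (∫ r in (0:ℝ)..(1 - s - t), Real.exp ((1 - s - t - r) * a + s * b + t * c + r * d))
        = (Real.exp (((1-s)*d + s*b) + (c-d)*t) - Real.exp (((1-s)*a + s*b) + (c-a)*t)) / (d - a) := by
    intro s t
    rw [intervalIntegral.integral_congr
        (g := fun r => Real.exp (((1-s-t)*a + s*b + t*c) + (d-a)*r))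
        (fun r _ => by simp only; congr 1; ring),
      exp_aff _ _ _ hda]
    congr 3 <;> ring
  have h2 : ∀ s : ℝ,
      (∫ t in (0:ℝ)..(1 - s), ∫ r in (0:ℝ)..(1 - s - t),
          Real.exp ((1 - s - t - r) * a + s * b + t * c + r * d))
        = (1/((d-a)*(c-d))) * (Real.exp (c + (b-c)*s) - Real.exp (d + (b-d)*s))
          - (1/((d-a)*(c-a))) * (Real.exp (c + (b-c)*s) - Real.exp (a + (b-a)*s)) := by
    intro s
    rw [intervalIntegral.integral_congr (g := fun t =>
        (1/(d-a)) * Real.exp (((1-s)*d + s*b) + (c-d)*t)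
          + (-(1/(d-a))) * Real.exp (((1-s)*a + s*b) + (c-a)*t))
        (fun t _ => by simp only [h1]; field_simp; ring)]
    rw [intervalIntegral.integral_add
        (((by fun_prop : Continuous fun t : ℝ => (1/(d-a)) * Real.exp (((1-s)*d + s*b) + (c-d)*t)).intervalIntegrable _ _))
        (((by fun_prop : Continuous fun t : ℝ => (-(1/(d-a))) * Real.exp (((1-s)*a + s*b) + (c-a)*t)).intervalIntegrable _ _)),
      exp_aff' _ _ _ _ hcd', exp_aff' _ _ _ _ hca]
    rw [show ((1-s)*d + s*b) + (c-d)*(1-s) = c + (b-c)*s from by ring,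
        show ((1-s)*a + s*b) + (c-a)*(1-s) = c + (b-c)*s from by ring,
        show ((1-s)*d + s*b) = d + (b-d)*s from by ring,
        show ((1-s)*a + s*b) = a + (b-a)*s from by ring]
    field_simp
    ring
  rw [intervalIntegral.integral_congr (g := fun s =>
      (1/((d-a)*(c-d)) - 1/((d-a)*(c-a))) * Real.exp (c + (b-c)*s)
        + (-(1/((d-a)*(c-d)))) * Real.exp (d + (b-d)*s)
        + (1/((d-a)*(c-a))) * Real.exp (a + (b-a)*s))
      (fun s _ => by simp only [h2]; ring)]
  rw [intervalIntegral.integral_add (((by fun_prop : Continuous fun s : ℝ =>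
        (1/((d-a)*(c-d)) - 1/((d-a)*(c-a))) * Real.exp (c + (b-c)*s)
          + (-(1/((d-a)*(c-d)))) * Real.exp (d + (b-d)*s)).intervalIntegrable _ _))
      (((by fun_prop : Continuous fun s : ℝ =>
        (1/((d-a)*(c-a))) * Real.exp (a + (b-a)*s)).intervalIntegrable _ _)),
    intervalIntegral.integral_add (((by fun_prop : Continuous fun s : ℝ =>
        (1/((d-a)*(c-d)) - 1/((d-a)*(c-a))) * Real.exp (c + (b-c)*s)).intervalIntegrable _ _))
      (((by fun_prop : Continuous fun s : ℝ =>
        (-(1/((d-a)*(c-d)))) * Real.exp (d + (b-d)*s)).intervalIntegrable _ _)),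
    exp_aff' _ _ _ _ hbc', exp_aff' _ _ _ _ hbd', exp_aff' _ _ _ _ hba]
  rw [show c + (b-c)*1 = b from by ring, show d + (b-d)*1 = b from by ring,
      show a + (b-a)*1 = b from by ring]
  have ha : -((1/((d-a)*(c-a))) / (b-a)) = 1/((a-b)*(a-c)*(a-d)) := by
    field_simp; ring
  have hc : -((1/((d-a)*(c-d)) - 1/((d-a)*(c-a)))/(b-c)) = 1/((c-a)*(c-b)*(c-d)) := by
    field_simp; ring
  have hd2 : (1/((d-a)*(c-d)))/(b-d) = 1/((d-a)*(d-b)*(d-c)) := by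
    field_simp; ring
  have hb2 : (1/((d-a)*(c-d)) - 1/((d-a)*(c-a)))/(b-c) - (1/((d-a)*(c-d)))/(b-d)
      + (1/((d-a)*(c-a)))/(b-a) = 1/((b-a)*(b-c)*(b-d)) := by
    field_simp; ring
  linear_combination Real.exp a * ha + Real.exp b * hb2 + Real.exp c * hc + Real.exp d * hd2
end

section
/- (Symmetrization of the MFD stiffness matrix.) Let m, n be finite types, G : Matrix m n ℝ, W : m → ℝ with 0 ≤ W e for all e, dV, ex : n → ℝ with 0 < dV i and 0 < ex i for all i, and dγ : n → ℝ with 0 ≤ dγ i for all i. Define L := (Matrix.diagonal dV)⁻¹ * Gᵀ * Matrix.diagonal W * G * Matrix.diagonal ex + Matrix.diagonal dγ and M := Matrix.diagonal ex * Gᵀ * Matrix.diagonal W * G * Matrix.diagonal ex + Matrix.diagonal (fun i ↦ ex i * dV i * dγ i). Then (i) Matrix.diagonal (fun i ↦ ex i * dV i) * L = M, and (ii) M is symmetric positive semidefinite (Matrix.PosSemidef M). In particular, L is self-adjoint and positive semidefinite with respect to the inner product (u, v)_{E_x D_V} := vᵀ (Matrix.diagonal (fun i ↦ ex i * dV i))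 u. -/
open Matrix

/-- Symmetrization of the MFD stiffness matrix: with
`L = 𝒟_V⁻¹ 𝒢ᵀ 𝒲 𝒢 E_x + 𝒟_γ` and
`M = E_x 𝒢ᵀ 𝒲 𝒢 E_x + diag(ex·dV·dγ)`, one has `diag(ex·dV) * L = M` and `M`
is symmetric positive semidefinite; hence `L` is self-adjoint and positive
semidefinite with respect to the inner product induced by `E_x 𝒟_V`. -/
theorem MFD_stiffness_symmetrization
    {m n : Type*} [Fintype m] [DecidableEq m] [Fintype n] [DecidableEq n]
    (G : Matrix m n ℝ)
    (W : m → ℝ) (hW : ∀ e, 0 ≤ W e)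
    (dV ex : n → ℝ) (hdV : ∀ i, 0 < dV i) (hex : ∀ i, 0 < ex i)
    (dγ : n → ℝ) (hdγ : ∀ i, 0 ≤ dγ i)
    (L M : Matrix n n ℝ)
    (hL : L = (Matrix.diagonal dV)⁻¹ * Gᵀ * Matrix.diagonal W * G * Matrix.diagonal ex
        + Matrix.diagonal dγ)
    (hM : M = Matrix.diagonal ex * Gᵀ * Matrix.diagonal W * G * Matrix.diagonal ex
        + Matrix.diagonal (fun i => ex i * dV i * dγ i)) :
    Matrix.diagonal (fun i => ex i * dV i) * L = M ∧ M.PosSemidef := by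
  constructor
  · subst hL hM
    have hinv : (Matrix.diagonal dV)⁻¹ = Matrix.diagonal fun i => (dV i)⁻¹ := by
      apply Matrix.inv_eq_right_inv
      rw [Matrix.diagonal_mul_diagonal,
        show (fun i => dV i * (dV i)⁻¹) = fun _ => (1 : ℝ) from
          funext fun i => mul_inv_cancel₀ (hdV i).ne', Matrix.diagonal_one]
    have key : (Matrix.diagonal fun i => ex i * dV i) *
        (Matrix.diagonal fun i => (dV i)⁻¹) = Matrix.diagonal ex := by
      rw [Matrix.diagonal_mul_diagonal]
      exact congrArg Matrix.diagonal (funext fun i => by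
        rw [mul_assoc, mul_inv_cancel₀ (hdV i).ne', mul_one])
    rw [Matrix.mul_add, hinv]
    congr 1
    · simp only [← Matrix.mul_assoc, key]
    · rw [Matrix.diagonal_mul_diagonal]
  · subst hM
    have h1 : ((Matrix.diagonal ex * Gᵀ * Matrix.diagonal W * G * Matrix.diagonal ex) :
        Matrix n n ℝ)
        = (G * Matrix.diagonal ex)ᴴ * Matrix.diagonal W * (G * Matrix.diagonal ex) := by
      simp [Matrix.conjTranspose_mul, Matrix.mul_assoc,
        show (Matrix.diagonal ex)ᴴ = Matrix.diagonal ex from by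
          simp [Matrix.conjTranspose, Matrix.diagonal_transpose],
        show Gᴴ = Gᵀ from rfl]
    rw [h1]
    exact ((Matrix.posSemidef_diagonal_iff.mpr hW).conjTranspose_mul_mul_same _).add
      (Matrix.posSemidef_diagonal_iff.mpr fun i =>
        mul_nonneg (mul_nonneg (hex i).le (hdV i).le) (hdγ i))
end
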